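/- arXiv:2403.09083 — 4 statements merged into one kernel-verified Lean document; each statement's English description precedes it below -/
import Mathlib

section
/- The matrix Σ_{t=1}^{N_t} H_[eff,t]ᴴ H_[eff,t] ∈ ℂ^{M×M} equals the Hadamard (entrywise) product (H_IRᴴ H_IR) ∘ (H_TI H_TIᴴ)ᵀ, where ᵀ denotes the transpose; equivalently, since H_TI H_TIᴴ is Hermitian, the second factor is the entrywise complex conjugate of H_TI H_TIᴴ. -/
open Matrix

/-- `∑_{t=1}^{N_t} H_[eff,t]ᴴ H_[eff,t] = (H_IRᴴ H_IR) ∘ (H_TI H_TIᴴ)ᵀ`,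
where `∘` is the Hadamard (entrywise) product and `ᵀ` the transpose. -/
theorem stmt_2 (Nr Nt M : ℕ)
    (H_IR : Matrix (Fin Nr) (Fin M) ℂ) (H_TI : Matrix (Fin M) (Fin Nt) ℂ)
    (Heff : Fin Nt → Matrix (Fin Nr) (Fin M) ℂ)
    (hHeff : ∀ t, Heff t = H_IR * Matrix.diagonal (fun m => H_TI m t)) :
    ∑ t, (Heff t)ᴴ * Heff t
      = Matrix.hadamard (H_IRᴴ * H_IR) (H_TI * H_TIᴴ)ᵀ := by
  ext i j
  simp only [Matrix.sum_apply, hHeff, Matrix.conjTranspose_apply, Matrix.mul_apply,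
    Matrix.diagonal_apply, mul_ite, ite_mul, mul_zero, zero_mul, Finset.sum_ite_eq,
    Finset.sum_ite_eq', Finset.mem_univ, if_true, star_mul', Matrix.hadamard_apply,
    Matrix.transpose_apply, Finset.mul_sum, Finset.sum_mul]
  exact Finset.sum_congr rfl fun r _ => Finset.sum_congr rfl fun t _ => by ring
end

section
/- Let c ∈ ℝ be fixed and let f₁, g₁, f₂, g₂ ∈ ℝ satisfy exp(i·c·(f₁−f₂)) ≠ 1 and exp(i·c·(g₁−g₂)) ≠ 1. Then the inner product a_X(f₁,g₁)ᴴ a_X(f₂,g₂) = Σ_{(x_h,x_v)} conj(a_X(f₁,g₁)(x_h,x_v)) · a_X(f₂,g₂)(x_h,x_v) tends to 0 as min(X_h, X_v) → ∞; that is, for every ε > 0 there exists X₀ such that for all X_h ≥ X₀ and X_v ≥ X₀ the modulus of this inner product is at most ε. -/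
/-- The general UPA response vector `a_X(f,g) ∈ ℂ^X` (with `X = X_h ⬝ X_v`), indexed by
pairs `(x_h, x_v)` with `0 ≤ x_h < X_h`, `0 ≤ x_v < X_v`, with entries
`(1/√X) ⬝ exp(i⬝c⬝(x_h⬝f + x_v⬝g))`, for a fixed real constant `c` (representing `2πd/λ`). -/
noncomputable def upa (Xh Xv : ℕ) (c f g : ℝ) : Fin Xh × Fin Xv → ℂ :=
  fun x => (1 / Real.sqrt (Xh * Xv) : ℝ) *
    Complex.exp (Complex.I * c * ((x.1 : ℕ) * f + (x.2 : ℕ) * g))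

/-!
The inner product factors as the product of the averages `(1/n) ∑_{i<n} zⁱ` of the powers
of the two unit-modulus phase ratios `z = exp(i c (f₂ - f₁))` and `w = exp(i c (g₂ - g₁))`.
Each average has modulus at most `1`, and for `z ≠ 1` the geometric sum stays bounded by
`2 / ‖z - 1‖`, so the horizontal average is `O(1/X_h)` and already forces the product to `0`.
-/

open Complex Filter Finset Topology
open scoped ComplexConjugate

lemma norm_geom_sum_le_of_norm_le_one {K : Type*} [NormedDivisionRing K] {z : K}
    (hz : z ≠ 1) (hz_norm : ‖z‖ ≤ 1) (n : ℕ) :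
    ‖∑ i ∈ range n, z ^ i‖ ≤ 2 / ‖z - 1‖ := by
  rw [geom_sum_eq hz, norm_div]
  gcongr
  calc ‖z ^ n - 1‖ ≤ ‖z ^ n‖ + ‖(1 : K)‖ := norm_sub_le _ _
    _ ≤ 1 + 1 := by
      rw [norm_pow, norm_one]
      gcongr
      exact pow_le_one₀ (norm_nonneg z) hz_norm
    _ = 2 := one_add_one_eq_two

section GeomMean

variable {𝕜 : Type*} [RCLike 𝕜]

lemma norm_geom_mean_le_one {z : 𝕜} (hz_norm : ‖z‖ ≤ 1) (n : ℕ) :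
    ‖(n : 𝕜)⁻¹ * ∑ i ∈ range n, z ^ i‖ ≤ 1 := by
  have hsum : ‖∑ i ∈ range n, z ^ i‖ ≤ n :=
    calc ‖∑ i ∈ range n, z ^ i‖ ≤ ∑ i ∈ range n, ‖z ^ i‖ := norm_sum_le _ _
      _ ≤ ∑ _i ∈ range n, 1 :=
        sum_le_sum fun i _ => by rw [norm_pow]; exact pow_le_one₀ (norm_nonneg z) hz_norm
      _ = n := by simp
  rw [norm_mul, norm_inv, RCLike.norm_natCast]
  exact inv_mul_le_one_of_le₀ hsum n.cast_nonneg

lemma tendsto_geom_mean_zero {z : 𝕜} (hz : z ≠ 1) (hz_norm : ‖z‖ ≤ 1) :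
    Tendsto (fun n : ℕ => (n : 𝕜)⁻¹ * ∑ i ∈ range n, z ^ i) atTop (𝓝 0) := by
  refine squeeze_zero_norm (fun n => ?_) (tendsto_const_div_atTop_nhds_zero_nat (2 / ‖z - 1‖))
  rw [norm_mul, norm_inv, RCLike.norm_natCast, inv_mul_eq_div]
  gcongr
  exact norm_geom_sum_le_of_norm_le_one hz hz_norm n

end GeomMean

lemma conj_upa_mul_upa (Xh Xv : ℕ) (c f₁ g₁ f₂ g₂ : ℝ) (x : Fin Xh × Fin Xv) :
    conj (upa Xh Xv c f₁ g₁ x) * upa Xh Xv c f₂ g₂ x =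
      ((Xh : ℂ)⁻¹ * exp (I * c * (f₂ - f₁)) ^ (x.1 : ℕ)) *
        ((Xv : ℂ)⁻¹ * exp (I * c * (g₂ - g₁)) ^ (x.2 : ℕ)) := by
  have hnorm : ((1 / √(Xh * Xv) : ℝ) : ℂ) * ((1 / √(Xh * Xv) : ℝ) : ℂ) =
      (Xh : ℂ)⁻¹ * (Xv : ℂ)⁻¹ := by
    rw [← ofReal_mul, div_mul_div_comm, one_mul, Real.mul_self_sqrt (by positivity)]
    push_cast
    rw [one_div, mul_inv]
  simp only [upa, map_mul, conj_ofReal, ← exp_conj, map_add, conj_I, map_natCast,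
    ← exp_nat_mul]
  rw [mul_mul_mul_comm, hnorm, ← exp_add, mul_mul_mul_comm, ← exp_add]
  congr 2
  ring

lemma sum_conj_upa_mul_upa (Xh Xv : ℕ) (c f₁ g₁ f₂ g₂ : ℝ) :
    ∑ x : Fin Xh × Fin Xv, conj (upa Xh Xv c f₁ g₁ x) * upa Xh Xv c f₂ g₂ x =
      ((Xh : ℂ)⁻¹ * ∑ i ∈ range Xh, exp (I * c * (f₂ - f₁)) ^ i) *
        ((Xv : ℂ)⁻¹ * ∑ j ∈ range Xv, exp (I * c * (g₂ - g₁)) ^ j) := by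
  simp only [conj_upa_mul_upa, Fintype.sum_prod_type, ← Finset.mul_sum, ← Finset.sum_mul,
    Fin.sum_univ_eq_sum_range (fun i => exp (I * c * (f₂ - f₁)) ^ i),
    Fin.sum_univ_eq_sum_range (fun j => exp (I * c * (g₂ - g₁)) ^ j)]

lemma norm_exp_I_mul_mul_sub (c a b : ℝ) : ‖exp (I * c * (a - b))‖ = 1 := by
  rw [mul_assoc, ← ofReal_sub, ← ofReal_mul, norm_exp_I_mul_ofReal]

theorem stmt_6_general (c f₁ g₁ f₂ g₂ : ℝ)
    (h₁ : Complex.exp (Complex.I * c * (f₁ - f₂)) ≠ 1) :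
    ∀ ε > (0 : ℝ), ∃ X₀ : ℕ, ∀ Xh Xv : ℕ, X₀ ≤ Xh → X₀ ≤ Xv →
      ‖∑ x : Fin Xh × Fin Xv,
          (starRingEnd ℂ) (upa Xh Xv c f₁ g₁ x) * upa Xh Xv c f₂ g₂ x‖ ≤ ε := by
  intro ε hε
  have hz : exp (I * c * (f₂ - f₁)) ≠ 1 := by
    rwa [show I * c * (f₂ - f₁) = -(I * c * (f₁ - f₂)) by ring, exp_neg, inv_ne_one]
  obtain ⟨X₀, hX₀⟩ := Metric.tendsto_atTop.1
    (tendsto_geom_mean_zero hz (norm_exp_I_mul_mul_sub c f₂ f₁).le) ε hε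
  refine ⟨X₀, fun Xh Xv hXh _ => ?_⟩
  rw [sum_conj_upa_mul_upa, norm_mul, ← mul_one ε]
  exact mul_le_mul (by simpa only [dist_zero_right] using (hX₀ Xh hXh).le)
    (norm_geom_mean_le_one (norm_exp_I_mul_mul_sub c g₂ g₁).le Xv) (norm_nonneg _) hε.le

/-- If `exp(i⬝c⬝(f₁−f₂)) ≠ 1` and `exp(i⬝c⬝(g₁−g₂)) ≠ 1`, then the inner
product `a_X(f₁,g₁)ᴴ a_X(f₂,g₂) = ∑_{(x_h,x_v)} conj(a_X(f₁,g₁)(x)) ⬝ a_X(f₂,g₂)(x)`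
tends to `0` as `min(X_h, X_v) → ∞`: for every `ε > 0` there is `X₀` such that for all
`X_h ≥ X₀` and `X_v ≥ X₀` the modulus of this inner product is at most `ε`. -/
theorem stmt_6 (c f₁ g₁ f₂ g₂ : ℝ)
    (h₁ : Complex.exp (Complex.I * c * (f₁ - f₂)) ≠ 1)
    (h₂ : Complex.exp (Complex.I * c * (g₁ - g₂)) ≠ 1) :
    ∀ ε > (0 : ℝ), ∃ X₀ : ℕ, ∀ Xh Xv : ℕ, X₀ ≤ Xh → X₀ ≤ Xv →
      ‖∑ x : Fin Xh × Fin Xv,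
          (starRingEnd ℂ) (upa Xh Xv c f₁ g₁ x) * upa Xh Xv c f₂ g₂ x‖ ≤ ε :=
  stmt_6_general c f₁ g₁ f₂ g₂ h₁
end

section
/- Let K ∈ ℂ^{n×n} be Hermitian positive semidefinite with eigenvalues λ₁ ≥ λ₂ ≥ … ≥ λ_n ≥ 0 (listed in descending order with multiplicity), and let W ∈ ℂ^{n×k} (k ≤ n) satisfy WᴴW = I_k. Then det(I_k + WᴴKW) is a real number and det(I_k + WᴴKW) ≤ Π_{i=1}^{k} (1 + λ_i). (This is the compression bound underlying the upper-bound part of Lemma 1: no k-dimensional semi-unitary compression can exceed the product over the k largest eigenvalues.) -/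
open Matrix Finset


variable {R : Type*} [CommRing R] {k n : ℕ}

lemma det_mul_expand (A : Matrix (Fin k) (Fin n) R) (B : Matrix (Fin n) (Fin k) R) :
    (A * B).det = ∑ f : Fin k → Fin n, (∏ i, A i (f i)) * (B.submatrix f id).det := by
  have h1 : (A * B) = fun i => ∑ l : Fin n, A i l • B l := by
    ext i j; simp [Matrix.mul_apply]
  have := (Matrix.detRowAlternating (R := R) (n := Fin k)).toMultilinearMap.map_sum
    (g := fun i l => A i l • B l)
  rw [show (A*B).det = Matrix.detRowAlternating (A*B) from rfl, h1, ← AlternatingMap.coe_multilinearMap, this]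
  refine Finset.sum_congr rfl fun f _ => ?_
  rw [MultilinearMap.map_smul_univ]
  rfl

lemma orderEmbOfFin_congr {s t : Finset (Fin n)} (hst : s = t) (hs : s.card = k)
    (ht : t.card = k) (i : Fin k) : s.orderEmbOfFin hs i = t.orderEmbOfFin ht i := by
  subst hst; rfl

lemma cauchy_binet (A : Matrix (Fin k) (Fin n) R) (B : Matrix (Fin n) (Fin k) R) :
    (A * B).det = ∑ s : {s : Finset (Fin n) // s.card = k},
      (A.submatrix id (s.1.orderEmbOfFin s.2)).det * (B.submatrix (s.1.orderEmbOfFin s.2) id).det := by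
  classical
  rw [det_mul_expand]
  have hzero : ∀ f : Fin k → Fin n, ¬ Function.Injective f →
      (∏ i, A i (f i)) * (B.submatrix f id).det = 0 := by
    intro f hf
    rw [Function.not_injective_iff] at hf
    obtain ⟨i, j, hij, hne⟩ := hf
    rw [Matrix.det_zero_of_row_eq hne (by ext l; simp [hij]), mul_zero]
  rw [← Finset.sum_filter_of_ne (p := fun f => Function.Injective f) (fun f _ hf => by
    by_contra h; exact hf (hzero f h))]
  have key : ∑ f ∈ Finset.univ.filter (fun f : Fin k → Fin n => Function.Injective f),
      (∏ i, A i (f i)) * (B.submatrix f id).det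
      = ∑ p : {s : Finset (Fin n) // s.card = k} × Equiv.Perm (Fin k),
        (∏ i, A i (p.1.1.orderEmbOfFin p.1.2 (p.2 i))) *
          (B.submatrix (p.1.1.orderEmbOfFin p.1.2 ∘ p.2) id).det := by
    refine (Finset.sum_bij (s := (Finset.univ : Finset ({s : Finset (Fin n) // s.card = k} × Equiv.Perm (Fin k))))
      (i := fun p _ => (p.1.1.orderEmbOfFin p.1.2) ∘ p.2) ?_ ?_ ?_ ?_).symm
    · intro p _
      simp only [Finset.mem_filter, Finset.mem_univ, true_and]
      exact (p.1.1.orderEmbOfFin p.1.2).injective.comp p.2.injective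
    · -- injectivity
      intro p _ q _ hpq
      have himg : p.1.1 = q.1.1 := by
        have h1 : Set.range ((p.1.1.orderEmbOfFin p.1.2) ∘ p.2) = Set.range (p.1.1.orderEmbOfFin p.1.2) := by
          rw [Set.range_comp, Equiv.range_eq_univ, Set.image_univ]
        have h2 : Set.range ((q.1.1.orderEmbOfFin q.1.2) ∘ q.2) = Set.range (q.1.1.orderEmbOfFin q.1.2) := by
          rw [Set.range_comp, Equiv.range_eq_univ, Set.image_univ]
        have := congrArg Set.range hpq
        rw [h1, h2, Finset.range_orderEmbOfFin, Finset.range_orderEmbOfFin] at this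
        exact_mod_cast Finset.coe_injective this
      obtain ⟨⟨s, hs⟩, σ⟩ := p
      obtain ⟨⟨t, ht⟩, τ⟩ := q
      simp only at himg
      subst himg
      simp only [Prod.mk.injEq, Subtype.mk.injEq, true_and]
      have : σ = τ := by
        ext i
        have h4 : σ i = τ i := (s.orderEmbOfFin hs).injective (congrFun hpq i)
        exact congrArg Fin.val h4
      exact this
    · -- surjectivity
      intro f hf
      have hfinj : Function.Injective f := (Finset.mem_filter.mp hf).2
      have hcard : (Finset.univ.image f).card = k := by
        rw [Finset.card_image_of_injective _ hfinj, Finset.card_univ, Fintype.card_fin]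
      set s : Finset (Fin n) := Finset.univ.image f with hs
      have hmem : ∀ i, f i ∈ s := fun i => Finset.mem_image_of_mem f (Finset.mem_univ i)
      have einj : Function.Injective (fun i => (s.orderIsoOfFin hcard).symm ⟨f i, hmem i⟩) := by
        intro a b hab
        apply hfinj
        have := congrArg (fun x => ((s.orderIsoOfFin hcard) x : Fin n)) hab
        simpa using this
      refine ⟨⟨⟨s, hcard⟩, Equiv.ofBijective _ ((Finite.injective_iff_bijective).mp einj)⟩,
        Finset.mem_univ _, ?_⟩
      funext i
      simp only [Function.comp_apply, Equiv.ofBijective_apply]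
      exact congrArg Subtype.val ((s.orderIsoOfFin hcard).apply_symm_apply ⟨f i, hmem i⟩)
    · intro p _
      rfl
  rw [key, Fintype.sum_prod_type]
  refine Finset.sum_congr rfl fun s _ => ?_
  -- inner sum over permutations
  have hperm : ∀ σ : Equiv.Perm (Fin k),
      (B.submatrix (s.1.orderEmbOfFin s.2 ∘ σ) id).det
        = Equiv.Perm.sign σ * (B.submatrix (s.1.orderEmbOfFin s.2) id).det := by
    intro σ
    have : B.submatrix (s.1.orderEmbOfFin s.2 ∘ σ) id
        = (B.submatrix (s.1.orderEmbOfFin s.2) id).submatrix σ id := by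
      ext i j; rfl
    rw [this, Matrix.det_permute]
  have hdetA : (A.submatrix id (s.1.orderEmbOfFin s.2)).det
      = ∑ σ : Equiv.Perm (Fin k), (Equiv.Perm.sign σ : R) * ∏ i, A i (s.1.orderEmbOfFin s.2 (σ i)) := by
    rw [← Matrix.det_transpose, Matrix.det_apply']
    refine Finset.sum_congr rfl fun σ _ => ?_
    congr 1
  simp only [hperm, hdetA, Finset.sum_mul]
  refine Finset.sum_congr rfl fun σ _ => ?_
  ring



lemma strictMono_val_le {k n : ℕ} {f : Fin k → Fin n} (hf : StrictMono f) (i : Fin k) :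
    (i : ℕ) ≤ (f i : ℕ) := by
  obtain ⟨j, hj⟩ := i
  induction j with
  | zero => simp
  | succ m ih =>
    have hm : m < k := Nat.lt_of_succ_lt hj
    have hlt : (⟨m, hm⟩ : Fin k) < ⟨m + 1, hj⟩ := by simp [Fin.lt_def]
    have h1 := hf hlt
    rw [Fin.lt_def] at h1
    have h2 := ih hm
    exact Nat.succ_le_of_lt (Nat.lt_of_le_of_lt h2 h1)

lemma prod_le_of_inj {n k : ℕ} (hkn : k ≤ n) (lam : Fin n → ℝ)
    (hdesc : ∀ i j : Fin n, i ≤ j → lam j ≤ lam i)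
    (hnonneg : ∀ i, 0 ≤ lam i) (h : Fin k → Fin n) (hinj : Function.Injective h) :
    ∏ j : Fin k, (1 + lam (h j)) ≤ ∏ i : Fin k, (1 + lam (Fin.castLE hkn i)) := by
  classical
  set t : Finset (Fin n) := Finset.univ.image h with ht
  have hcard : t.card = k := by
    rw [ht, Finset.card_image_of_injective _ hinj, Finset.card_univ, Fintype.card_fin]
  set m := t.orderEmbOfFin hcard with hm
  have h1 : ∏ j : Fin k, (1 + lam (h j)) = ∏ x ∈ t, (1 + lam x) := by
    rw [ht, Finset.prod_image (fun x _ y _ hxy => hinj hxy)]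
  have h2 : ∏ x ∈ t, (1 + lam x) = ∏ j : Fin k, (1 + lam (m j)) := by
    have himg : Finset.univ.image m = t := by
      apply Finset.coe_injective
      rw [Finset.coe_image, Finset.coe_univ, Set.image_univ]
      exact Finset.range_orderEmbOfFin t hcard
    rw [← himg, Finset.prod_image (fun x _ y _ hxy => m.injective hxy)]
  rw [h1, h2]
  apply Finset.prod_le_prod
  · intro i _
    have := hnonneg (m i); linarith
  · intro i _
    have hle : Fin.castLE hkn i ≤ m i := by
      rw [Fin.le_def]
      simpa using strictMono_val_le m.strictMono i
    have := hdesc _ _ hle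
    linarith


open scoped ComplexOrder

/-- Let `K ∈ ℂ^{n×n}` be Hermitian positive semidefinite with
eigenvalues `λ₁ ≥ … ≥ λ_n ≥ 0` (descending, with multiplicity), and let
`W ∈ ℂ^{n×k}` (`k ≤ n`) satisfy `WᴴW = I_k`. Then `det(I_k + WᴴKW)` is real and
`det(I_k + WᴴKW) ≤ ∏_{i=1}^{k} (1 + λ_i)`. -/
theorem stmt_10 (n k : ℕ) (hkn : k ≤ n)
    (K : Matrix (Fin n) (Fin n) ℂ) (hK : K.PosSemidef)
    (lam : Fin n → ℝ)
    (hdesc : ∀ i j : Fin n, i ≤ j → lam j ≤ lam i)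
    (hnonneg : ∀ i, 0 ≤ lam i)
    (hspec : ∃ σ : Equiv.Perm (Fin n), ∀ i, lam i = hK.1.eigenvalues (σ i))
    (W : Matrix (Fin n) (Fin k) ℂ)
    (hW : Wᴴ * W = 1) :
    ((1 + Wᴴ * K * W).det).im = 0
    ∧ ((1 + Wᴴ * K * W).det).re ≤ ∏ i : Fin k, (1 + lam (Fin.castLE hkn i)) := by
  classical
  obtain ⟨σ0, hσ0⟩ := hspec
  set ev : Fin n → ℝ := hK.1.eigenvalues with hev
  have hevlam : ∀ j, ev j = lam (σ0.symm j) := by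
    intro j
    rw [hσ0 (σ0.symm j), Equiv.apply_symm_apply]
  set U : Matrix (Fin n) (Fin n) ℂ := (hK.1.eigenvectorUnitary : Matrix (Fin n) (Fin n) ℂ) with hUdef
  have hUU : U * star U = 1 := (Matrix.mem_unitaryGroup_iff).mp (hK.1.eigenvectorUnitary).2
  set C : Matrix (Fin n) (Fin k) ℂ := star U * W with hC
  have hCH : Cᴴ = Wᴴ * U := by
    rw [hC, Matrix.conjTranspose_mul, Matrix.star_eq_conjTranspose U, Matrix.conjTranspose_conjTranspose]
  have hCC : Cᴴ * C = 1 := by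
    rw [hCH, hC, Matrix.mul_assoc, ← Matrix.mul_assoc U (star U) W, hUU, Matrix.one_mul, hW]
  set d : Fin n → ℝ := fun j => 1 + ev j with hd
  have hdecomp : (1 : Matrix (Fin k) (Fin k) ℂ) + Wᴴ * K * W
      = Cᴴ * Matrix.diagonal (fun j => (d j : ℂ)) * C := by
    have hdiag : Matrix.diagonal (fun j => (d j : ℂ))
        = 1 + Matrix.diagonal (RCLike.ofReal ∘ ev) := by
      ext i j
      rcases eq_or_ne i j with h | h
      · subst h
        simp [hd, Matrix.one_apply, RCLike.ofReal]
      · simp [Matrix.diagonal_apply_ne _ h, Matrix.one_apply_ne h]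
    have h1 : Cᴴ * Matrix.diagonal (fun j => (d j : ℂ)) * C
        = Wᴴ * (U * Matrix.diagonal (fun j => (d j : ℂ)) * star U) * W := by
      rw [hCH, hC]; simp only [Matrix.mul_assoc]
    have h2 : U * Matrix.diagonal (fun j => (d j : ℂ)) * star U = 1 + K := by
      rw [hdiag, Matrix.mul_add, Matrix.add_mul, Matrix.mul_one, hUU]
      congr 1
      exact (hK.1.spectral_theorem).symm
    rw [h1, h2, Matrix.mul_add, Matrix.mul_one, Matrix.add_mul, hW]
  set g : {s : Finset (Fin n) // s.card = k} → (Fin k → Fin n) :=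
    fun s => (s.1.orderEmbOfFin s.2 : Fin k → Fin n) with hg
  set z : {s : Finset (Fin n) // s.card = k} → ℂ :=
    fun s => (C.submatrix (g s) id).det with hz
  set p : {s : Finset (Fin n) // s.card = k} → ℝ := fun s => ∏ j, d (g s j) with hp
  have hterm : ∀ s : {s : Finset (Fin n) // s.card = k},
      ((Cᴴ * Matrix.diagonal (fun j => (d j : ℂ))).submatrix id (s.1.orderEmbOfFin s.2)).det
        * ((C.submatrix (s.1.orderEmbOfFin s.2) id)).det
      = ((p s * Complex.normSq (z s) : ℝ) : ℂ) := by
    intro s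
    have hsub : (Cᴴ * Matrix.diagonal (fun j => (d j : ℂ))).submatrix id (s.1.orderEmbOfFin s.2)
        = (C.submatrix (g s) id)ᴴ * Matrix.diagonal (fun j => (d (g s j) : ℂ)) := by
      ext i j
      simp [Matrix.mul_diagonal, Matrix.submatrix_apply, Matrix.conjTranspose_apply, hg]
    rw [hsub, Matrix.det_mul, Matrix.det_conjTranspose, Matrix.det_diagonal, Complex.ofReal_mul]
    rw [show ((p s : ℝ) : ℂ) = ∏ j, (d (g s j) : ℂ) by rw [hp]; push_cast; rfl]
    rw [mul_comm (star (z s)) _, mul_assoc, Complex.star_def, ← Complex.normSq_eq_conj_mul_self]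

  have hdet : (1 + Wᴴ * K * W).det
      = ((∑ s : {s : Finset (Fin n) // s.card = k}, p s * Complex.normSq (z s) : ℝ) : ℂ) := by
    rw [hdecomp, cauchy_binet, Complex.ofReal_sum]
    exact Finset.sum_congr rfl fun s _ => hterm s
  have hone : ∑ s : {s : Finset (Fin n) // s.card = k}, Complex.normSq (z s) = 1 := by
    have h1 : ((1 : Matrix (Fin k) (Fin k) ℂ)).det
        = ((∑ s : {s : Finset (Fin n) // s.card = k}, Complex.normSq (z s) : ℝ) : ℂ) := by
      rw [← hCC, cauchy_binet, Complex.ofReal_sum]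
      refine Finset.sum_congr rfl fun s _ => ?_
      have hsub : Cᴴ.submatrix id (s.1.orderEmbOfFin s.2) = (C.submatrix (g s) id)ᴴ := by
        ext i j
        simp [Matrix.submatrix_apply, Matrix.conjTranspose_apply, hg]
      rw [hsub, Matrix.det_conjTranspose]
      rw [Complex.star_def, ← Complex.normSq_eq_conj_mul_self]

    rw [Matrix.det_one] at h1
    exact_mod_cast h1.symm
  have hQ : ∀ s : {s : Finset (Fin n) // s.card = k},
      p s ≤ ∏ i : Fin k, (1 + lam (Fin.castLE hkn i)) := by
    intro s
    have hinj : Function.Injective (fun j => σ0.symm (g s j)) :=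
      σ0.symm.injective.comp (s.1.orderEmbOfFin s.2).injective
    have := prod_le_of_inj hkn lam hdesc hnonneg _ hinj
    rw [hp]
    simp only [hd, hevlam]
    exact this
  constructor
  · rw [hdet]; exact Complex.ofReal_im _
  · rw [hdet, Complex.ofReal_re]
    calc ∑ s : {s : Finset (Fin n) // s.card = k}, p s * Complex.normSq (z s)
        ≤ ∑ s : {s : Finset (Fin n) // s.card = k},
            (∏ i : Fin k, (1 + lam (Fin.castLE hkn i))) * Complex.normSq (z s) :=
          Finset.sum_le_sum fun s _ =>
            mul_le_mul_of_nonneg_right (hQ s) (Complex.normSq_nonneg _)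
      _ = (∏ i : Fin k, (1 + lam (Fin.castLE hkn i))) := by
          rw [← Finset.mul_sum, hone, mul_one]
end

section
/- Let N ≥ 1 and let g_1,…,g_N > 0 be fixed reals. For P > 0 define the water-filling capacity C(P) := sup over all p_1,…,p_N ≥ 0 with Σ_ℓ p_ℓ = P of Σ_{ℓ=1}^{N} log₂(1 + p_ℓ g_ℓ), and the equal-power rate E(P) := Σ_{ℓ=1}^{N} log₂(1 + (P/N)·g_ℓ). Then 0 ≤ C(P) − E(P) for all P > 0, and C(P) − E(P) → 0 as P → ∞. (This justifies that the gap Δ_gap from equal-power allocation becomes negligible as the SNR, i.e., the transmit power P_TX, grows.) -/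
/-!
Since `1 + p g = g (g⁻¹ + p)`, Jensen's inequality for `log` bounds the rate of any allocation
of total power `P` by `∑ logb 2 (g_ℓ (P + S) / N)` with `S = ∑ g_ℓ⁻¹`, which is at most the
equal-power rate at power `P + S`. Hence `E P ≤ C P ≤ E (P + S)`, and as `log t ≤ t - 1` each
summand of `E` grows by at most `S / P` when the power increases by `S`, so the gap is `O(1 / P)`.
-/

open Filter Real Finset

variable {ι : Type*} [Fintype ι]

def achievableRates (g : ι → ℝ) (P : ℝ) : Set ℝ :=
  {r | ∃ p : ι → ℝ, (∀ i, 0 ≤ p i) ∧ ∑ i, p i = P ∧ r = ∑ i, logb 2 (1 + p i * g i)}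

variable [Nonempty ι]

theorem sum_log_le_card_mul_log_average {x : ι → ℝ} (hx : ∀ i, 0 < x i) :
    ∑ i, log (x i) ≤ Fintype.card ι * log ((∑ i, x i) / Fintype.card ι) := by
  have hn : (0 : ℝ) < Fintype.card ι := Nat.cast_pos.2 Fintype.card_pos
  have hJensen := strictConcaveOn_log_Ioi.concaveOn.le_map_sum (t := univ)
    (w := fun _ => (Fintype.card ι : ℝ)⁻¹) (p := x) (fun _ _ => by positivity)
    (by simp [hn.ne']) (fun i _ => hx i)
  simp only [smul_eq_mul, inv_mul_eq_div, ← sum_div] at hJensen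
  rwa [div_le_iff₀' hn] at hJensen

theorem log_one_add_mul_sub_log_le {x y c : ℝ} (hx : 0 < x) (hy : 0 ≤ y) (hc : 0 < c) :
    log (1 + (x + y) * c) - log (1 + x * c) ≤ y / x := by
  have hxc : 0 < x * c := mul_pos hx hc
  rw [← log_div (by positivity) (by positivity)]
  calc log ((1 + (x + y) * c) / (1 + x * c))
      ≤ (1 + (x + y) * c) / (1 + x * c) - 1 := log_le_sub_one_of_pos (by positivity)
    _ = y * c / (1 + x * c) := by field_simp; ring
    _ ≤ y * c / (x * c) := by gcongr; linarith
    _ = y / x := mul_div_mul_right y x hc.ne'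

theorem sum_logb_one_add_mul_le {g p : ι → ℝ} (hg : ∀ i, 0 < g i) (hp : ∀ i, 0 ≤ p i) :
    ∑ i, logb 2 (1 + p i * g i) ≤
      ∑ i, logb 2 (1 + ((∑ j, p j + ∑ j, (g j)⁻¹) / Fintype.card ι) * g i) := by
  set Q := (∑ j, p j + ∑ j, (g j)⁻¹) / Fintype.card ι
  have hy : ∀ i, 0 < (g i)⁻¹ + p i := fun i => by have := hg i; have := hp i; positivity
  have hQ : 0 < Q := by
    have hn : (0 : ℝ) < Fintype.card ι := Nat.cast_pos.2 Fintype.card_pos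
    have : 0 < ∑ j, ((g j)⁻¹ + p j) := sum_pos (fun i _ => hy i) univ_nonempty
    rw [sum_add_distrib, add_comm] at this
    positivity
  have hsplit : ∀ i, log (1 + p i * g i) = log (g i) + log ((g i)⁻¹ + p i) := fun i => by
    rw [← log_mul (hg i).ne' (hy i).ne', mul_add, mul_inv_cancel₀ (hg i).ne', mul_comm]
  have hJensen := sum_log_le_card_mul_log_average hy
  rw [sum_add_distrib, add_comm (∑ j, (g j)⁻¹)] at hJensen
  simp only [logb, ← sum_div]
  gcongr ?_ / _
  calc ∑ i, log (1 + p i * g i)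
      = ∑ i, log (g i) + ∑ i, log ((g i)⁻¹ + p i) := by simp only [hsplit, sum_add_distrib]
    _ ≤ ∑ i, log (g i) + Fintype.card ι * log Q := by gcongr
    _ = ∑ i, log (Q * g i) := by
      simp only [log_mul hQ.ne' (hg _).ne', sum_add_distrib, sum_const, card_univ, nsmul_eq_mul]
      ring
    _ ≤ ∑ i, log (1 + Q * g i) := by
      gcongr with i
      · have := hg i; positivity
      · linarith

theorem sum_logb_one_add_mul_sub_le {g : ι → ℝ} (hg : ∀ i, 0 < g i) {P S : ℝ} (hP : 0 < P)
    (hS : 0 ≤ S) :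
    ∑ i, logb 2 (1 + ((P + S) / Fintype.card ι) * g i) -
        ∑ i, logb 2 (1 + (P / Fintype.card ι) * g i) ≤ Fintype.card ι * S / (P * log 2) := by
  have hn : (0 : ℝ) < Fintype.card ι := Nat.cast_pos.2 Fintype.card_pos
  have hterm : ∀ i, log (1 + (P / Fintype.card ι + S / Fintype.card ι) * g i) -
      log (1 + (P / Fintype.card ι) * g i) ≤ S / P := fun i => by
    have := log_one_add_mul_sub_log_le (div_pos hP hn) (div_nonneg hS hn.le) (hg i)
    rwa [div_div_div_cancel_right₀ hn.ne'] at this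
  simp only [logb, ← sum_div, ← sub_div, ← sum_sub_distrib, add_div P S]
  rw [← div_div]
  gcongr
  calc _ ≤ ∑ _i : ι, S / P := sum_le_sum fun i _ => hterm i
    _ = Fintype.card ι * S / P := by rw [sum_const, card_univ, nsmul_eq_mul, mul_div_assoc]

theorem equalPowerRate_mem_achievableRates (g : ι → ℝ) {P : ℝ} (hP : 0 ≤ P) :
    ∑ i, logb 2 (1 + (P / Fintype.card ι) * g i) ∈ achievableRates g P := by
  have hn : (Fintype.card ι : ℝ) ≠ 0 := Nat.cast_ne_zero.2 Fintype.card_ne_zero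
  exact ⟨fun _ => P / Fintype.card ι, fun _ => by positivity,
    by simp [mul_div_cancel₀ _ hn], rfl⟩

theorem le_equalPowerRate_of_mem_achievableRates {g : ι → ℝ} (hg : ∀ i, 0 < g i) {P r : ℝ}
    (hr : r ∈ achievableRates g P) :
    r ≤ ∑ i, logb 2 (1 + ((P + ∑ j, (g j)⁻¹) / Fintype.card ι) * g i) := by
  obtain ⟨p, hp, rfl, rfl⟩ := hr
  exact sum_logb_one_add_mul_le hg hp

/-- For `N ≥ 1` channel gains `g_ℓ > 0`, the water-filling capacity
`C(P) := sup { ∑_ℓ log₂(1 + p_ℓ g_ℓ) : p_ℓ ≥ 0, ∑_ℓ p_ℓ = P }` and the equal-power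
rate `E(P) := ∑_ℓ log₂(1 + (P/N) g_ℓ)` satisfy `0 ≤ C(P) − E(P)` for all `P > 0`, and
`C(P) − E(P) → 0` as `P → ∞`. -/
theorem stmt_14 (N : ℕ) (hN : 1 ≤ N) (g : Fin N → ℝ) (hg : ∀ ℓ, 0 < g ℓ)
    (C E : ℝ → ℝ)
    (hC : ∀ P : ℝ, C P = sSup {r : ℝ | ∃ p : Fin N → ℝ,
        (∀ ℓ, 0 ≤ p ℓ) ∧ (∑ ℓ, p ℓ) = P ∧ r = ∑ ℓ, Real.logb 2 (1 + p ℓ * g ℓ)})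
    (hE : ∀ P : ℝ, E P = ∑ ℓ, Real.logb 2 (1 + (P / N) * g ℓ)) :
    (∀ P : ℝ, 0 < P → 0 ≤ C P - E P)
    ∧ Filter.Tendsto (fun P => C P - E P) Filter.atTop (nhds 0) := by
  have : Nonempty (Fin N) := ⟨⟨0, hN⟩⟩
  set S := ∑ ℓ, (g ℓ)⁻¹
  have hS : 0 ≤ S := sum_nonneg fun ℓ _ => (inv_pos.2 (hg ℓ)).le
  have hE_mem (P : ℝ) (hP : 0 ≤ P) : E P ∈ achievableRates g P := by
    simpa [hE] using equalPowerRate_mem_achievableRates g hP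
  have hle_E (P r : ℝ) (hr : r ∈ achievableRates g P) : r ≤ E (P + S) := by
    simpa [hE] using le_equalPowerRate_of_mem_achievableRates hg hr
  have hE_le_C (P : ℝ) (hP : 0 ≤ P) : E P ≤ C P := by
    rw [hC]; exact le_csSup ⟨E (P + S), hle_E P⟩ (hE_mem P hP)
  have hgap (P : ℝ) (hP : 0 < P) : C P - E P ≤ N * S / (P * log 2) := by
    have hC_le : C P ≤ E (P + S) := by
      rw [hC]; exact csSup_le ⟨E P, hE_mem P hP.le⟩ (hle_E P)
    have hE_incr := sum_logb_one_add_mul_sub_le hg hP hS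
    simp only [Fintype.card_fin, ← hE] at hE_incr
    linarith
  refine ⟨fun P hP => sub_nonneg.2 (hE_le_C P hP.le), ?_⟩
  refine tendsto_of_tendsto_of_tendsto_of_le_of_le' tendsto_const_nhds
    ((tendsto_const_nhds (x := (N * S : ℝ))).div_atTop
      (tendsto_id.atTop_mul_const (log_pos one_lt_two)))
    ?_ ?_
  · filter_upwards [eventually_gt_atTop 0] with P hP using sub_nonneg.2 (hE_le_C P hP.le)
  · filter_upwards [eventually_gt_atTop 0] with P hP using hgap P hP
end
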